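/- Let l₁ ≐ l₂ be a level equation in canonical form where the right side l₂ contains at least two distinct variables and the constant coefficient of l₁ is strictly greater than that of l₂. Then the equation is solvable but admits no most general unifier. -/

import Mathlib

/-- Universe level expressions: `l ::= i | 0 | S l | l ⊔ l'`. -/
inductive Lvl : Type
  | var : ℕ → Lvl
  | zero : Lvl
  | succ : Lvl → Lvl
  | max : Lvl → Lvl → Lvl
  deriving DecidableEq

namespace Lvl

/-- Interpretation of a level under an assignment `φ` of naturals to variables. -/
def eval (φ : ℕ → ℕ) : Lvl → ℕ
  | .var i => φ i
  | .zero => 0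
  | .succ l => l.eval φ + 1
  | .max a b => Nat.max (a.eval φ) (b.eval φ)

/-- Semantic equivalence: equal value under every assignment. -/
def Equiv (l l' : Lvl) : Prop := ∀ φ : ℕ → ℕ, l.eval φ = l'.eval φ

/-- Application of a level substitution. -/
def subst (θ : ℕ → Lvl) : Lvl → Lvl
  | .var i => θ i
  | .zero => .zero
  | .succ l => .succ (l.subst θ)
  | .max a b => .max (a.subst θ) (b.subst θ)

/-- Free variables of a level. -/
def fv : Lvl → Finset ℕ
  | .var i => {i}
  | .zero => ∅
  | .succ l => l.fv
  | .max a b => a.fv ∪ b.fv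

/-- The constant level `n`, i.e. `Sⁿ 0`. -/
def const (n : ℕ) : Lvl := Lvl.succ^[n] Lvl.zero

/-- The level `n + i`, i.e. `Sⁿ i`. -/
def atom (n i : ℕ) : Lvl := Lvl.succ^[n] (Lvl.var i)

end Lvl

/-- `θ` is a unifier of the equation `l₁ ≐ l₂`. -/
def Unifies (θ : ℕ → Lvl) (l₁ l₂ : Lvl) : Prop := Lvl.Equiv (l₁.subst θ) (l₂.subst θ)

/-- `θ` is a most general unifier of the equation `l₁ ≐ l₂`. -/
def IsMGU (θ : ℕ → Lvl) (l₁ l₂ : Lvl) : Prop :=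
  Unifies θ l₁ l₂ ∧ ∀ τ, Unifies τ l₁ l₂ →
    ∃ θ' : ℕ → Lvl, ∀ i ∈ l₁.fv ∪ l₂.fv, Lvl.Equiv ((θ i).subst θ') (τ i)

/-- The level `p ⊔ (n₁ + i₁) ⊔ ... ⊔ (n_m + i_m)` given by canonical-form data. -/
def buildCanon (p : ℕ) (L : List (ℕ × ℕ)) : Lvl :=
  L.foldr (fun a acc => Lvl.max (Lvl.atom a.1 a.2) acc) (Lvl.const p)

/-- The equation `buildCanon p₁ L₁ ≐ buildCanon p₂ L₂` is in canonical form: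
both sides canonical (coefficients bounded by the constant coefficient, variables
pairwise distinct), shared variables have equal coefficients on both sides, and
some coefficient on some side equals `0`. -/
def CanonEqn (p₁ : ℕ) (L₁ : List (ℕ × ℕ)) (p₂ : ℕ) (L₂ : List (ℕ × ℕ)) : Prop :=
  (∀ a ∈ L₁, a.1 ≤ p₁) ∧ (L₁.map Prod.snd).Nodup ∧
  (∀ a ∈ L₂, a.1 ≤ p₂) ∧ (L₂.map Prod.snd).Nodup ∧
  (∀ a ∈ L₁, ∀ b ∈ L₂, a.2 = b.2 → a.1 = b.1) ∧
  0 ∈ (p₁ :: p₂ :: (L₁ ++ L₂).map Prod.fst)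

/-!
Sending one variable `x` of `l₂` (with coefficient `n`) to `p₁ - n` and every other variable
to `0` makes both sides evaluate to `p₁`, so the equation is solvable. Doing this for two
distinct variables `x ≠ y` of `l₂` gives two unifiers. If `θ` were most general, both would be
instances of `θ`, and by monotonicity of evaluation `θ` would evaluate, under the pointwise
minimum of the two instantiating assignments, to `0` on every variable of `l₂`. Then `l₂[θ]`
evaluates to at most `p₂ < p₁ ≤ l₁[θ]`, so `θ` is not a unifier.
-/

namespace Lvl

lemma eval_const (n : ℕ) (φ : ℕ → ℕ) : (const n).eval φ = n := by
  induction n with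
  | zero => rfl
  | succ n ih => rw [const, Function.iterate_succ_apply', eval, ← const, ih]

lemma eval_atom (n i : ℕ) (φ : ℕ → ℕ) : (atom n i).eval φ = n + φ i := by
  induction n with
  | zero => simp [atom, eval]
  | succ n ih => rw [atom, Function.iterate_succ_apply', eval, ← atom, ih, Nat.succ_add]

lemma fv_atom (n i : ℕ) : (atom n i).fv = {i} := by
  induction n with
  | zero => rfl
  | succ n ih => rw [atom, Function.iterate_succ_apply', fv, ← atom, ih]

lemma eval_subst (θ : ℕ → Lvl) (φ : ℕ → ℕ) (l : Lvl) :
    (l.subst θ).eval φ = l.eval fun k => (θ k).eval φ := by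
  induction l with
  | var i => rfl
  | zero => rfl
  | succ l ih => simp only [subst, eval, ih]
  | max a b iha ihb => simp only [subst, eval, iha, ihb]

lemma eval_mono (l : Lvl) : Monotone fun φ : ℕ → ℕ => l.eval φ := by
  intro φ φ' h
  induction l with
  | var i => exact h i
  | zero => exact le_rfl
  | succ l ih => exact Nat.succ_le_succ ih
  | max a b iha ihb => exact max_le_max iha ihb

def singleConst (i n : ℕ) : ℕ → Lvl := fun k => if k = i then const n else const 0

lemma eval_singleConst (i n k : ℕ) (φ : ℕ → ℕ) :
    (singleConst i n k).eval φ = if k = i then n else 0 := by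
  unfold singleConst
  split_ifs <;> exact eval_const _ φ

end Lvl

open Lvl

lemma eval_buildCanon_le_iff {p m : ℕ} {L : List (ℕ × ℕ)} {φ : ℕ → ℕ} :
    (buildCanon p L).eval φ ≤ m ↔ p ≤ m ∧ ∀ c ∈ L, c.1 + φ c.2 ≤ m := by
  induction L with
  | nil => simp [buildCanon, eval_const]
  | cons a L ih =>
    simp only [buildCanon, List.foldr_cons, eval, eval_atom] at ih ⊢
    change Max.max _ _ ≤ m ↔ _
    rw [max_le_iff, ih, List.forall_mem_cons]
    tauto

lemma le_eval_buildCanon (p : ℕ) (L : List (ℕ × ℕ)) (φ : ℕ → ℕ) :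
    p ≤ (buildCanon p L).eval φ :=
  (eval_buildCanon_le_iff.mp le_rfl).1

lemma le_eval_buildCanon_of_mem {p : ℕ} {L : List (ℕ × ℕ)} {c : ℕ × ℕ} (hc : c ∈ L)
    (φ : ℕ → ℕ) : c.1 + φ c.2 ≤ (buildCanon p L).eval φ :=
  (eval_buildCanon_le_iff.mp le_rfl).2 c hc

lemma mem_fv_buildCanon {p : ℕ} {L : List (ℕ × ℕ)} {c : ℕ × ℕ} (hc : c ∈ L) :
    c.2 ∈ (buildCanon p L).fv := by
  induction L with
  | nil => simp at hc
  | cons a L ih =>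
    simp only [buildCanon, List.foldr_cons, fv, fv_atom] at ih ⊢
    rcases List.mem_cons.mp hc with rfl | hc
    · exact Finset.mem_union_left _ (Finset.mem_singleton_self _)
    · exact Finset.mem_union_right _ (ih hc)

lemma unifies_singleConst {p₁ p₂ : ℕ} {L₁ L₂ : List (ℕ × ℕ)}
    (h₁ : ∀ c ∈ L₁, c.1 ≤ p₁) (h₂ : ∀ c ∈ L₂, c.1 ≤ p₂) (hnodup : (L₂.map Prod.snd).Nodup)
    (hshared : ∀ c ∈ L₁, ∀ d ∈ L₂, c.2 = d.2 → c.1 = d.1) (hgt : p₂ < p₁)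
    {a : ℕ × ℕ} (ha : a ∈ L₂) :
    Unifies (singleConst a.2 (p₁ - a.1)) (buildCanon p₁ L₁) (buildCanon p₂ L₂) := by
  intro φ
  set ψ : ℕ → ℕ := fun k => if k = a.2 then p₁ - a.1 else 0 with hψ
  have hsubst : (fun k => (singleConst a.2 (p₁ - a.1) k).eval φ) = ψ :=
    funext fun k => eval_singleConst _ _ k φ
  rw [eval_subst, eval_subst, hsubst]
  have ha₁ : a.1 ≤ p₂ := h₂ a ha
  have hleft : (buildCanon p₁ L₁).eval ψ ≤ p₁ := by
    refine eval_buildCanon_le_iff.mpr ⟨le_rfl, fun c hc => ?_⟩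
    have := h₁ c hc
    simp only [hψ]
    split_ifs with h
    · have := hshared c hc a ha h
      omega
    · omega
  have hright : (buildCanon p₂ L₂).eval ψ ≤ p₁ := by
    refine eval_buildCanon_le_iff.mpr ⟨hgt.le, fun c hc => ?_⟩
    have := h₂ c hc
    simp only [hψ]
    split_ifs with h
    · obtain rfl : c = a := List.inj_on_of_nodup_map hnodup hc ha h
      omega
    · omega
  have hψa : ψ a.2 = p₁ - a.1 := if_pos rfl
  have hright_ge := le_eval_buildCanon_of_mem (p := p₂) ha ψ
  have hleft_ge := le_eval_buildCanon p₁ L₁ ψ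
  omega

/-- The witness is the pointwise minimum of the two assignments instantiating `θ` to `τ₁` and
`τ₂`. -/
lemma IsMGU.exists_eval_le_min {θ τ₁ τ₂ : ℕ → Lvl} {l₁ l₂ : Lvl} (hθ : IsMGU θ l₁ l₂)
    (hτ₁ : Unifies τ₁ l₁ l₂) (hτ₂ : Unifies τ₂ l₁ l₂) (φ : ℕ → ℕ) :
    ∃ ψ : ℕ → ℕ, ∀ i ∈ l₁.fv ∪ l₂.fv,
      (θ i).eval ψ ≤ min ((τ₁ i).eval φ) ((τ₂ i).eval φ) := by
  obtain ⟨θ₁, hθ₁⟩ := hθ.2 τ₁ hτ₁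
  obtain ⟨θ₂, hθ₂⟩ := hθ.2 τ₂ hτ₂
  refine ⟨fun k => min ((θ₁ k).eval φ) ((θ₂ k).eval φ), fun i hi => le_min ?_ ?_⟩
  · rw [← hθ₁ i hi φ, eval_subst]
    exact eval_mono _ fun k => min_le_left _ _
  · rw [← hθ₂ i hi φ, eval_subst]
    exact eval_mono _ fun k => min_le_right _ _

lemma not_unifies_of_eval_eq_zero {p₁ p₂ : ℕ} {L₁ L₂ : List (ℕ × ℕ)} {θ : ℕ → Lvl}
    {ψ : ℕ → ℕ} (h₂ : ∀ c ∈ L₂, c.1 ≤ p₂) (hgt : p₂ < p₁)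
    (hzero : ∀ c ∈ L₂, (θ c.2).eval ψ = 0) :
    ¬ Unifies θ (buildCanon p₁ L₁) (buildCanon p₂ L₂) := by
  intro hθ
  have hleft : p₁ ≤ ((buildCanon p₁ L₁).subst θ).eval ψ := by
    rw [eval_subst]
    exact le_eval_buildCanon _ _ _
  have hright : ((buildCanon p₂ L₂).subst θ).eval ψ ≤ p₂ := by
    rw [eval_subst]
    refine eval_buildCanon_le_iff.mpr ⟨le_rfl, fun c hc => ?_⟩
    simpa [hzero c hc] using h₂ c hc
  have := hθ ψ
  omega

/-- If a level equation `l₁ ≐ l₂` in canonical form is such that `l₂` contains at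
least two distinct variables and the constant coefficient of `l₁` is strictly
greater than that of `l₂`, then the equation is solvable but has no most general
unifier. -/
theorem solvable_no_mgu_two_vars (p₁ p₂ : ℕ) (L₁ L₂ : List (ℕ × ℕ))
    (hcanon : CanonEqn p₁ L₁ p₂ L₂)
    (htwo : 2 ≤ L₂.length) (hgt : p₂ < p₁) :
    (∃ θ, Unifies θ (buildCanon p₁ L₁) (buildCanon p₂ L₂)) ∧
      ¬ ∃ θ, IsMGU θ (buildCanon p₁ L₁) (buildCanon p₂ L₂) := by
  obtain ⟨h₁, -, h₂, hnodup, hshared, -⟩ := hcanon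
  have hunif := fun {a} => unifies_singleConst (a := a) h₁ h₂ hnodup hshared hgt
  obtain ⟨a, b, rest, rfl⟩ : ∃ a b rest, L₂ = a :: b :: rest := by
    match L₂, htwo with
    | a :: b :: rest, _ => exact ⟨a, b, rest, rfl⟩
  have hab : a.2 ≠ b.2 := fun h => (List.nodup_cons.mp hnodup).1 (by simp [h])
  refine ⟨⟨_, hunif (List.mem_cons_self ..)⟩, fun ⟨θ, hθ⟩ => ?_⟩
  obtain ⟨ψ, hψ⟩ := hθ.exists_eval_le_min (hunif (List.mem_cons_self ..))
    (hunif (List.mem_cons_of_mem _ (List.mem_cons_self ..))) fun _ => 0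
  refine not_unifies_of_eval_eq_zero (ψ := ψ) h₂ hgt (fun c hc => ?_) hθ.1
  have := hψ c.2 (Finset.mem_union_right _ (mem_fv_buildCanon hc))
  simp only [eval_singleConst] at this
  split_ifs at this <;> omega
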